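/- arXiv:2603.28531 — 7 statements merged into one kernel-verified Lean document; each statement's English description precedes it below -/
import Mathlib

section
/- Let s ∈ {1, −1}, c ∈ ℝ, Ω < 0 with s·(c + 4Ω) > 0. Then the functions U(ξ) = −12Ω·sech²(√(−Ω)·ξ) and A(ξ) = √(−12·s·Ω·(c + 4Ω))·sech(√(−Ω)·ξ) satisfy, for all ξ ∈ ℝ, the profile system U'' − c·U + (1/2)·U² + s·A² = 0 and A'' + (Ω + k·U)·A = 0 with coupling constant k = 1/6. -/
/-!
With `S = sech (b ξ)` one has `(sech (b ·))'' = b² (S - 2 S³)` and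
`(sech² (b ·))'' = b² (4 S² - 6 S⁴)`, so both equations of the profile system become polynomial identities in `S`. For `U = -12 Ω S²`,
`A = a S` with `b² = -Ω` and `a² = -12 s Ω (c + 4 Ω)`, all coefficients cancel once `s² = 1`.
-/

open Real

lemma hasDerivAt_cosh_comp_mul (b ξ : ℝ) :
    HasDerivAt (fun x => cosh (b * x)) (sinh (b * ξ) * b) ξ :=
  ((hasDerivAt_id ξ).const_mul b).cosh.congr_deriv (by simp)

lemma hasDerivAt_sinh_comp_mul (b ξ : ℝ) :
    HasDerivAt (fun x => sinh (b * x)) (cosh (b * ξ) * b) ξ :=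
  ((hasDerivAt_id ξ).const_mul b).sinh.congr_deriv (by simp)

lemma hasDerivAt_const_mul_sech_comp_mul (a b ξ : ℝ) :
    HasDerivAt (fun x => a * (1 / cosh (b * x)))
      (-a * b * sinh (b * ξ) / cosh (b * ξ) ^ 2) ξ := by
  have hc := (cosh_pos (b * ξ)).ne'
  simp only [one_div]
  refine (((hasDerivAt_cosh_comp_mul b ξ).fun_inv hc).const_mul a).congr_deriv ?_
  field_simp

lemma deriv_deriv_const_mul_sech_comp_mul (a b ξ : ℝ) :
    deriv (deriv fun x => a * (1 / cosh (b * x))) ξ =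
      a * b ^ 2 * (1 / cosh (b * ξ) - 2 * (1 / cosh (b * ξ)) ^ 3) := by
  have hc := (cosh_pos (b * ξ)).ne'
  have hderiv : deriv (fun x => a * (1 / cosh (b * x))) =
      fun x => -a * b * sinh (b * x) / cosh (b * x) ^ 2 :=
    funext fun x => (hasDerivAt_const_mul_sech_comp_mul a b x).deriv
  have hnum := (hasDerivAt_sinh_comp_mul b ξ).const_mul (-a * b)
  have hden := (hasDerivAt_cosh_comp_mul b ξ).fun_pow 2
  rw [hderiv, (hnum.fun_div hden (by positivity)).deriv]
  field_simp
  rw [sinh_sq]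
  ring

lemma hasDerivAt_const_mul_sech_comp_mul_sq (K b ξ : ℝ) :
    HasDerivAt (fun x => K * (1 / cosh (b * x)) ^ 2)
      (-2 * K * b * sinh (b * ξ) / cosh (b * ξ) ^ 3) ξ := by
  have hc := (cosh_pos (b * ξ)).ne'
  simp only [one_div]
  refine ((((hasDerivAt_cosh_comp_mul b ξ).fun_inv hc).fun_pow 2).const_mul K).congr_deriv ?_
  norm_num
  field_simp

lemma deriv_deriv_const_mul_sech_comp_mul_sq (K b ξ : ℝ) :
    deriv (deriv fun x => K * (1 / cosh (b * x)) ^ 2) ξ =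
      K * b ^ 2 * (4 * (1 / cosh (b * ξ)) ^ 2 - 6 * (1 / cosh (b * ξ)) ^ 4) := by
  have hc := (cosh_pos (b * ξ)).ne'
  have hderiv : deriv (fun x => K * (1 / cosh (b * x)) ^ 2) =
      fun x => -2 * K * b * sinh (b * x) / cosh (b * x) ^ 3 :=
    funext fun x => (hasDerivAt_const_mul_sech_comp_mul_sq K b x).deriv
  have hnum := (hasDerivAt_sinh_comp_mul b ξ).const_mul (-2 * K * b)
  have hden := (hasDerivAt_cosh_comp_mul b ξ).fun_pow 3
  rw [hderiv, (hnum.fun_div hden (by positivity)).deriv]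
  field_simp
  rw [sinh_sq]
  ring

/-- The exact coupled solitary wave `U(ξ) = −12Ω·sech²(√(−Ω)ξ)`,
`A(ξ) = √(−12sΩ(c+4Ω))·sech(√(−Ω)ξ)` satisfies the profile system with
coupling constant `k = 1/6`. -/
theorem exact_coupled_soliton_k_one_sixth (s c Ω : ℝ)
    (hs : s = 1 ∨ s = -1) (hΩ : Ω < 0) (hpos : 0 < s * (c + 4 * Ω))
    (U A : ℝ → ℝ)
    (hU : U = fun ξ => -12 * Ω * (1 / Real.cosh (Real.sqrt (-Ω) * ξ)) ^ 2)
    (hA : A = fun ξ => Real.sqrt (-12 * s * Ω * (c + 4 * Ω)) *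
      (1 / Real.cosh (Real.sqrt (-Ω) * ξ))) :
    (∀ ξ : ℝ, deriv (deriv U) ξ - c * U ξ + (1 / 2) * U ξ ^ 2 + s * A ξ ^ 2 = 0) ∧
    (∀ ξ : ℝ, deriv (deriv A) ξ + (Ω + (1 / 6) * U ξ) * A ξ = 0) := by
  have hb : √(-Ω) ^ 2 = -Ω := sq_sqrt (by linarith)
  have ha : √(-12 * s * Ω * (c + 4 * Ω)) ^ 2 = -12 * s * Ω * (c + 4 * Ω) :=
    sq_sqrt (by nlinarith)
  have hs2 : s ^ 2 = 1 := by rcases hs with rfl | rfl <;> norm_num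
  subst hU hA
  refine ⟨fun ξ => ?_, fun ξ => ?_⟩
  · beta_reduce
    rw [deriv_deriv_const_mul_sech_comp_mul_sq]
    generalize 1 / cosh (√(-Ω) * ξ) = S
    linear_combination (-12 * Ω * (4 * S ^ 2 - 6 * S ^ 4)) * hb + s * S ^ 2 * ha
      + (-12 * Ω * (c + 4 * Ω) * S ^ 2) * hs2
  · beta_reduce
    rw [deriv_deriv_const_mul_sech_comp_mul]
    generalize 1 / cosh (√(-Ω) * ξ) = S
    linear_combination (√(-12 * s * Ω * (c + 4 * Ω)) * (S - 2 * S ^ 3)) * hb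
end

section
/- Let s ∈ {1, −1}, c > 0, Ω < 0 with s·(c + 4Ω) > 0, and set k = −3Ω/(c − 2Ω). Then the functions U(ξ) = 2(c − 2Ω)·sech²(√(−Ω)·ξ) and A(ξ) = √(2·s·(c + 4Ω)·(c − 2Ω))·sech(√(−Ω)·ξ)·tanh(√(−Ω)·ξ) satisfy, for all ξ ∈ ℝ, the profile system U'' − c·U + (1/2)·U² + s·A² = 0 and A'' + (Ω + k·U)·A = 0. -/
/-!
Write `S = sech (a ξ)` and `T = tanh (a ξ)` with `a = √(-Ω)`. Since `S' = -a S T`, `T' = a S²` and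
`S² + T² = 1`, both profiles are closed under two derivatives:
`(S²)'' = a² (4 S² - 6 S⁴)` and `(S T)'' = a² (1 - 6 S²) S T`. Substituting these, `a² = -Ω`,
`k · 2(c - 2Ω) = -6Ω` and `T² = 1 - S²` turns both equations into polynomial identities in `S`.
-/

open Real

theorem one_div_cosh_sq_add_tanh_sq (x : ℝ) : (1 / cosh x) ^ 2 + tanh x ^ 2 = 1 := by
  rw [tanh_eq_sinh_div_cosh]
  field_simp
  linear_combination -cosh_sq x

theorem hasDerivAt_one_div_cosh_const_mul (a x : ℝ) :
    HasDerivAt (fun y => 1 / cosh (a * y)) (-a * (1 / cosh (a * x)) * tanh (a * x)) x := by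
  have hcosh := ((hasDerivAt_id x).const_mul a).cosh
  refine (hcosh.inv (cosh_pos _).ne').congr_deriv ?_ |>.congr_of_eventuallyEq ?_
  · rw [tanh_eq_sinh_div_cosh]
    simp only [id_eq, mul_one, one_div, neg_mul]
    ring
  · filter_upwards with y using one_div _

theorem hasDerivAt_tanh_const_mul (a x : ℝ) :
    HasDerivAt (fun y => tanh (a * y)) (a * (1 / cosh (a * x)) ^ 2) x := by
  have hcosh := ((hasDerivAt_id x).const_mul a).cosh
  have hsinh := ((hasDerivAt_id x).const_mul a).sinh
  refine (hsinh.div hcosh (cosh_pos _).ne').congr_deriv ?_ |>.congr_of_eventuallyEq ?_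
  · have := (cosh_pos (a * x)).ne'
    field_simp
    simp only [id_eq, cosh_sq_sub_sinh_sq, mul_one]
  · filter_upwards with y using tanh_eq_sinh_div_cosh _

section ProfileDerivatives

variable (a : ℝ)

theorem deriv_one_div_cosh_const_mul_sq :
    deriv (fun y => (1 / cosh (a * y)) ^ 2) =
      fun x => -2 * a * (1 / cosh (a * x)) ^ 2 * tanh (a * x) := by
  ext x
  refine (((hasDerivAt_one_div_cosh_const_mul a x).fun_pow 2).congr_deriv ?_).deriv
  ring

theorem deriv_deriv_one_div_cosh_const_mul_sq (x : ℝ) :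
    deriv (deriv fun y => (1 / cosh (a * y)) ^ 2) x =
      a ^ 2 * (4 * (1 / cosh (a * x)) ^ 2 - 6 * (1 / cosh (a * x)) ^ 4) := by
  rw [deriv_one_div_cosh_const_mul_sq]
  refine ((((hasDerivAt_one_div_cosh_const_mul a x).fun_pow 2).const_mul (-2 * a)).mul
    (hasDerivAt_tanh_const_mul a x) |>.congr_deriv ?_).deriv
  linear_combination (4 * a ^ 2 * (1 / cosh (a * x)) ^ 2) * one_div_cosh_sq_add_tanh_sq (a * x)

theorem deriv_one_div_cosh_mul_tanh_const_mul :
    deriv (fun y => 1 / cosh (a * y) * tanh (a * y)) =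
      fun x => a * (1 / cosh (a * x)) * (2 * (1 / cosh (a * x)) ^ 2 - 1) := by
  ext x
  refine ((hasDerivAt_one_div_cosh_const_mul a x).mul (hasDerivAt_tanh_const_mul a x)
    |>.congr_deriv ?_).deriv
  linear_combination (-a * (1 / cosh (a * x))) * one_div_cosh_sq_add_tanh_sq (a * x)

theorem deriv_deriv_one_div_cosh_mul_tanh_const_mul (x : ℝ) :
    deriv (deriv fun y => 1 / cosh (a * y) * tanh (a * y)) x =
      a ^ 2 * (1 - 6 * (1 / cosh (a * x)) ^ 2) * (1 / cosh (a * x) * tanh (a * x)) := by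
  rw [deriv_one_div_cosh_mul_tanh_const_mul]
  have hS := hasDerivAt_one_div_cosh_const_mul a x
  refine ((hS.const_mul a).mul (((hS.fun_pow 2).const_mul 2).sub_const 1) |>.congr_deriv ?_).deriv
  ring

end ProfileDerivatives

/-- The exact coupled solitary wave `U(ξ) = 2(c−2Ω)·sech²(√(−Ω)ξ)`,
`A(ξ) = √(2s(c+4Ω)(c−2Ω))·sech(√(−Ω)ξ)·tanh(√(−Ω)ξ)` satisfies the profile
system with coupling constant `k = −3Ω/(c−2Ω)`. -/
theorem exact_coupled_soliton_sign_indefinite (s c Ω k : ℝ)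
    (hs : s = 1 ∨ s = -1) (hc : 0 < c) (hΩ : Ω < 0)
    (hpos : 0 < s * (c + 4 * Ω))
    (hk : k = -3 * Ω / (c - 2 * Ω))
    (U A : ℝ → ℝ)
    (hU : U = fun ξ => 2 * (c - 2 * Ω) * (1 / Real.cosh (Real.sqrt (-Ω) * ξ)) ^ 2)
    (hA : A = fun ξ => Real.sqrt (2 * s * (c + 4 * Ω) * (c - 2 * Ω)) *
      (1 / Real.cosh (Real.sqrt (-Ω) * ξ)) * Real.tanh (Real.sqrt (-Ω) * ξ)) :
    (∀ ξ : ℝ, deriv (deriv U) ξ - c * U ξ + (1 / 2) * U ξ ^ 2 + s * A ξ ^ 2 = 0) ∧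
    (∀ ξ : ℝ, deriv (deriv A) ξ + (Ω + k * U ξ) * A ξ = 0) := by
  have hd : 0 < c - 2 * Ω := by linarith
  set a := √(-Ω)
  set L := √(2 * s * (c + 4 * Ω) * (c - 2 * Ω))
  have ha2 : a ^ 2 = -Ω := sq_sqrt (by linarith)
  have hL2 : L ^ 2 = 2 * s * (c + 4 * Ω) * (c - 2 * Ω) := sq_sqrt (by nlinarith)
  have hs2 : s ^ 2 = 1 := by rcases hs with rfl | rfl <;> norm_num
  have hkU : k * (2 * (c - 2 * Ω)) = -6 * Ω := by
    rw [hk, mul_left_comm, div_mul_cancel₀ _ hd.ne']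
    ring
  replace hA : A = fun ξ => L * (1 / cosh (a * ξ) * tanh (a * ξ)) := by rw [hA]; ext; ring
  subst hU hA
  refine ⟨fun ξ => ?_, fun ξ => ?_⟩ <;>
    simp only [deriv_const_mul_field', deriv_const_mul_field, deriv_deriv_one_div_cosh_const_mul_sq,
      deriv_deriv_one_div_cosh_mul_tanh_const_mul]
  · have hST := one_div_cosh_sq_add_tanh_sq (a * ξ)
    set S := 1 / cosh (a * ξ)
    set T := tanh (a * ξ)
    linear_combination (2 * (c - 2 * Ω) * (4 * S ^ 2 - 6 * S ^ 4)) * ha2 + (s * S ^ 2 * T ^ 2) * hL2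
      + (2 * (c + 4 * Ω) * (c - 2 * Ω) * S ^ 2) * (T ^ 2 * hs2 + hST)
  · set S := 1 / cosh (a * ξ)
    linear_combination (L * S * tanh (a * ξ)) * ((1 - 6 * S ^ 2) * ha2 + S ^ 2 * hkU)
end

section
/- Let c, Ω, s ∈ ℝ and k ≠ 0, and let U, A : ℝ → ℝ be twice differentiable functions satisfying the profile system U'' − c·U + (1/2)·U² + s·A² = 0 and A'' + (Ω + k·U)·A = 0 on ℝ. Then the function H(ξ) = (1/2)·U'(ξ)² − (c/2)·U(ξ)² + (1/6)·U(ξ)³ + (s/k)·A'(ξ)² + s·U(ξ)·A(ξ)² + (Ω·s/k)·A(ξ)² is constant on ℝ. -/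
/-! Writing `E₁ = U'' − cU + U²/2 + sA²` and `E₂ = A'' + (Ω + kU)A` for the two equations, the
derivative of `H` along any curve is `U'·E₁ + (2s/k)·A'·E₂`; the coupling terms `2sUAA'` cancel
because `(s/k)·k = s`. Along a solution both equations vanish, so `H' = 0` and `H` is constant. -/

/-- `H` as a function of the phase-space point `(U, U', A, A') = (u, p, a, q)`. -/
noncomputable def profileHamiltonian (c Ω s k u p a q : ℝ) : ℝ :=
  (1 / 2) * p ^ 2 - (c / 2) * u ^ 2 + (1 / 6) * u ^ 3
    + (s / k) * q ^ 2 + s * u * a ^ 2 + (Ω * s / k) * a ^ 2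

theorem hasDerivAt_profileHamiltonian {c Ω s k : ℝ} (hk : k ≠ 0) {u p a q : ℝ → ℝ}
    {p' q' x : ℝ} (hu : HasDerivAt u (p x) x) (hp : HasDerivAt p p' x)
    (ha : HasDerivAt a (q x) x) (hq : HasDerivAt q q' x) :
    HasDerivAt (fun ξ ↦ profileHamiltonian c Ω s k (u ξ) (p ξ) (a ξ) (q ξ))
      (p x * (p' - c * u x + (1 / 2) * u x ^ 2 + s * a x ^ 2)
        + 2 * s / k * q x * (q' + (Ω + k * u x) * a x)) x := by
  have h := ((((((hp.pow 2).const_mul (1 / 2 : ℝ)).sub ((hu.pow 2).const_mul (c / 2))).add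
    ((hu.pow 3).const_mul (1 / 6))).add ((hq.pow 2).const_mul (s / k))).add
    ((hu.const_mul s).mul (ha.pow 2))).add ((ha.pow 2).const_mul (Ω * s / k))
  refine h.congr_deriv ?_
  simp only [Pi.pow_apply, Nat.cast_ofNat]
  field_simp
  ring

/-- The first invariant `H = U'²/2 − cU²/2 + U³/6 + (s/k)A'² + sUA² + (Ωs/k)A²`
is constant along solutions of the profile system. -/
theorem first_invariant_constant (c Ω s k : ℝ) (hk : k ≠ 0)
    (U A : ℝ → ℝ)
    (hU : Differentiable ℝ U) (hU' : Differentiable ℝ (deriv U))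
    (hA : Differentiable ℝ A) (hA' : Differentiable ℝ (deriv A))
    (heq1 : ∀ ξ : ℝ, deriv (deriv U) ξ - c * U ξ + (1 / 2) * U ξ ^ 2 + s * A ξ ^ 2 = 0)
    (heq2 : ∀ ξ : ℝ, deriv (deriv A) ξ + (Ω + k * U ξ) * A ξ = 0) :
    ∀ ξ₁ ξ₂ : ℝ,
      (1 / 2) * (deriv U ξ₁) ^ 2 - (c / 2) * U ξ₁ ^ 2 + (1 / 6) * U ξ₁ ^ 3
        + (s / k) * (deriv A ξ₁) ^ 2 + s * U ξ₁ * A ξ₁ ^ 2 + (Ω * s / k) * A ξ₁ ^ 2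
      = (1 / 2) * (deriv U ξ₂) ^ 2 - (c / 2) * U ξ₂ ^ 2 + (1 / 6) * U ξ₂ ^ 3
        + (s / k) * (deriv A ξ₂) ^ 2 + s * U ξ₂ * A ξ₂ ^ 2 + (Ω * s / k) * A ξ₂ ^ 2 := by
  have hH : ∀ ξ, HasDerivAt
      (fun ξ ↦ profileHamiltonian c Ω s k (U ξ) (deriv U ξ) (A ξ) (deriv A ξ)) 0 ξ := by
    intro ξ
    simpa only [heq1, heq2, mul_zero, add_zero] using
      hasDerivAt_profileHamiltonian (c := c) (Ω := Ω) (s := s) hk (hU ξ).hasDerivAt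
        (hU' ξ).hasDerivAt (hA ξ).hasDerivAt (hA' ξ).hasDerivAt
  exact is_const_of_deriv_eq_zero (fun ξ ↦ (hH ξ).differentiableAt) (fun ξ ↦ (hH ξ).deriv)
end

section
/- Let c, Ω, s ∈ ℝ and k = 1/6, and let U, A : ℝ → ℝ be twice differentiable functions satisfying the profile system U'' − c·U + (1/2)·U² + s·A² = 0 and A'' + (Ω + (1/6)·U)·A = 0 on ℝ. Then the function I(ξ) = A·A'·U' − U·(A')² + A²·(Ω·U + (1/12)·U² + (s/4)·A²) + 3·(c + 4Ω)·((A')² + Ω·A²) is constant on ℝ. -/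
/-!
Differentiating `I` along arbitrary twice differentiable `U, A` gives, after expanding,
an exact linear combination of the residuals of the two profile equations, with coefficients
`A A'` and `A U' - 2 U A' + 6 (c + 4Ω) A'`; the value `k = 1/6` is what makes the remaining
terms cancel. Along solutions both residuals vanish, so `I' = 0` and `I` is constant.
-/

/-- `I` as a function on phase space, at the point `(U, U', A, A') = (u, u', a, a')`. -/
noncomputable def secondInvariant (c Ω s u u' a a' : ℝ) : ℝ :=
  a * a' * u' - u * a' ^ 2 + a ^ 2 * (Ω * u + (1 / 12) * u ^ 2 + (s / 4) * a ^ 2)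
    + 3 * (c + 4 * Ω) * (a' ^ 2 + Ω * a ^ 2)

theorem hasDerivAt_secondInvariant (c Ω s : ℝ) {U U' A A' : ℝ → ℝ} {x u'' a'' : ℝ}
    (hU : HasDerivAt U (U' x) x) (hU' : HasDerivAt U' u'' x)
    (hA : HasDerivAt A (A' x) x) (hA' : HasDerivAt A' a'' x) :
    HasDerivAt (fun x => secondInvariant c Ω s (U x) (U' x) (A x) (A' x))
      (A x * A' x * (u'' - c * U x + (1 / 2) * U x ^ 2 + s * A x ^ 2)
        + (A x * U' x - 2 * U x * A' x + 6 * (c + 4 * Ω) * A' x)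
          * (a'' + (Ω + (1 / 6) * U x) * A x)) x := by
  have h := (((hA.mul hA').mul hU').sub (hU.mul (hA'.pow 2))).add
    ((hA.pow 2).mul (((hU.const_mul Ω).add ((hU.pow 2).const_mul (1 / 12))).add
      ((hA.pow 2).const_mul (s / 4)))) |>.add
    (((hA'.pow 2).add ((hA.pow 2).const_mul Ω)).const_mul (3 * (c + 4 * Ω)))
  exact h.congr_deriv (by simp only [Pi.add_apply, Pi.mul_apply, Pi.pow_apply]; ring)

/-- For `k = 1/6`, the second invariant
`I = AA'U' − U(A')² + A²(ΩU + U²/12 + sA²/4) + 3(c+4Ω)((A')² + ΩA²)`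
is constant along solutions of the profile system. -/
theorem second_invariant_constant_k_one_sixth (c Ω s : ℝ)
    (U A : ℝ → ℝ)
    (hU : Differentiable ℝ U) (hU' : Differentiable ℝ (deriv U))
    (hA : Differentiable ℝ A) (hA' : Differentiable ℝ (deriv A))
    (heq1 : ∀ ξ : ℝ, deriv (deriv U) ξ - c * U ξ + (1 / 2) * U ξ ^ 2 + s * A ξ ^ 2 = 0)
    (heq2 : ∀ ξ : ℝ, deriv (deriv A) ξ + (Ω + (1 / 6) * U ξ) * A ξ = 0) :
    ∀ ξ₁ ξ₂ : ℝ,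
      A ξ₁ * deriv A ξ₁ * deriv U ξ₁ - U ξ₁ * (deriv A ξ₁) ^ 2
        + A ξ₁ ^ 2 * (Ω * U ξ₁ + (1 / 12) * U ξ₁ ^ 2 + (s / 4) * A ξ₁ ^ 2)
        + 3 * (c + 4 * Ω) * ((deriv A ξ₁) ^ 2 + Ω * A ξ₁ ^ 2)
      = A ξ₂ * deriv A ξ₂ * deriv U ξ₂ - U ξ₂ * (deriv A ξ₂) ^ 2
        + A ξ₂ ^ 2 * (Ω * U ξ₂ + (1 / 12) * U ξ₂ ^ 2 + (s / 4) * A ξ₂ ^ 2)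
        + 3 * (c + 4 * Ω) * ((deriv A ξ₂) ^ 2 + Ω * A ξ₂ ^ 2) := by
  have hI : ∀ x, HasDerivAt
      (fun x => secondInvariant c Ω s (U x) (deriv U x) (A x) (deriv A x)) 0 x := fun x =>
    (hasDerivAt_secondInvariant c Ω s (hU x).hasDerivAt (hU' x).hasDerivAt
      (hA x).hasDerivAt (hA' x).hasDerivAt).congr_deriv (by rw [heq1 x, heq2 x]; ring)
  exact is_const_of_deriv_eq_zero (fun x => (hI x).differentiableAt) (fun x => (hI x).deriv)
end

section
/- Let c > 0 and k > 1/6. Set q = (√(1 + 48k) − 3)/2, Ω̃_c = −(c/16)·(√(1 + 48k) − 3)², and U₀(ξ) = 3c·sech²(√c·ξ/2). Then the function g̃(ξ) = sech^q(√c·ξ/2)·tanh(√c·ξ/2) satisfies g̃''(ξ) + (Ω̃_c + k·U₀(ξ))·g̃(ξ) = 0 for all ξ ∈ ℝ. -/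
/-!
With `a = √c / 2` the eigenfunction is `g̃ ξ = F (a ξ)` for `F y = sinh y · cosh y ^ (-(q+1))`,
and a direct computation gives `F'' = (q² - (q+1)(q+2) sech²) F`. Rescaling multiplies the
second derivative by `a² = c/4`, so the equation reduces to the two identities
`Ω̃_c = -(c/4) q²` and `(q+1)(q+2) = 12k`; the latter says that `q` is the larger root
of `q² + 3q + 2 - 12k`.
-/

open Real

lemma deriv_deriv_comp_mul_left (f : ℝ → ℝ) (a x : ℝ) :
    deriv (deriv fun y => f (a * y)) x = a ^ 2 * deriv (deriv f) (a * x) := by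
  have h : deriv (fun y => f (a * y)) = fun y => a * deriv f (a * y) :=
    funext fun y => deriv_comp_mul_left a f y
  rw [h, deriv_const_mul_field']
  beta_reduce
  rw [deriv_comp_mul_left, smul_eq_mul]
  ring

lemma hasDerivAt_cosh_rpow (p x : ℝ) :
    HasDerivAt (fun y => cosh y ^ p) (p * sinh x * cosh x ^ (p - 1)) x := by
  convert (hasDerivAt_cosh x).rpow_const (Or.inl (cosh_pos x).ne') using 1
  ring

lemma one_div_cosh_rpow_mul_tanh (q y : ℝ) :
    (1 / cosh y) ^ q * tanh y = sinh y * cosh y ^ (-(q + 1)) := by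
  have hC := cosh_pos y
  rw [one_div, inv_rpow hC.le, ← rpow_neg hC.le, tanh_eq_sinh_div_cosh, neg_add,
    rpow_add hC, rpow_neg_one]
  ring

lemma hasDerivAt_sinh_mul_cosh_rpow (q x : ℝ) :
    HasDerivAt (fun y => sinh y * cosh y ^ (-(q + 1)))
      (-q * cosh x ^ (-q) + (q + 1) * cosh x ^ (-(q + 2))) x := by
  have hC : cosh x ≠ 0 := (cosh_pos x).ne'
  refine ((hasDerivAt_sinh x).mul (hasDerivAt_cosh_rpow (-(q + 1)) x)).congr_deriv ?_
  have e₀ : -q = -(q + 2) + (2 : ℕ) := by push_cast; ring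
  have e₁ : -(q + 1) = -(q + 2) + (1 : ℕ) := by push_cast; ring
  have e₂ : -(q + 1) - 1 = -(q + 2) := by ring
  rw [e₂, e₀, e₁, rpow_add_natCast hC, rpow_add_natCast hC]
  linear_combination ((q + 1) * cosh x ^ (-(q + 2))) * cosh_sq' x

lemma deriv_deriv_sinh_mul_cosh_rpow (q y : ℝ) :
    deriv (deriv fun y => sinh y * cosh y ^ (-(q + 1))) y =
      (q ^ 2 - (q + 1) * (q + 2) / cosh y ^ 2) * (sinh y * cosh y ^ (-(q + 1))) := by
  have hC : cosh y ≠ 0 := (cosh_pos y).ne'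
  rw [funext fun x => (hasDerivAt_sinh_mul_cosh_rpow q x).deriv]
  have h := ((hasDerivAt_cosh_rpow (-q) y).const_mul (-q)).fun_add
    ((hasDerivAt_cosh_rpow (-(q + 2)) y).const_mul (q + 1))
  rw [h.deriv, show -q - 1 = -(q + 1) by ring,
    show -(q + 2) - 1 = -(q + 1) - (2 : ℕ) by push_cast; ring, rpow_sub_natCast hC]
  field_simp
  ring

/-- The excited-state eigenfunction `g̃(ξ) = sech^q(√c·ξ/2)·tanh(√c·ξ/2)` with
`q = (√(1+48k) − 3)/2` satisfies `g̃'' + (Ω̃_c + kU₀)g̃ = 0` at the second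
bifurcation point `Ω̃_c = −(c/16)(√(1+48k) − 3)²`, for `k > 1/6`. -/
theorem excited_state_eigenfunction (c k : ℝ) (hc : 0 < c) (hk : 1 / 6 < k)
    (q Ωc : ℝ)
    (hq : q = (Real.sqrt (1 + 48 * k) - 3) / 2)
    (hΩc : Ωc = -(c / 16) * (Real.sqrt (1 + 48 * k) - 3) ^ 2)
    (U₀ g : ℝ → ℝ)
    (hU₀ : U₀ = fun ξ => 3 * c * (1 / Real.cosh (Real.sqrt c * ξ / 2)) ^ 2)
    (hg : g = fun ξ => (1 / Real.cosh (Real.sqrt c * ξ / 2)) ^ q *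
      Real.tanh (Real.sqrt c * ξ / 2)) :
    ∀ ξ : ℝ, deriv (deriv g) ξ + (Ωc + k * U₀ ξ) * g ξ = 0 := by
  intro ξ
  set a := √c / 2
  have hg' : g = fun ξ => sinh (a * ξ) * cosh (a * ξ) ^ (-(q + 1)) := by
    rw [hg]
    ext x
    rw [← one_div_cosh_rpow_mul_tanh, mul_div_right_comm]
  have ha : a ^ 2 = c / 4 := by rw [div_pow, sq_sqrt hc.le]; norm_num
  have hsqrt : √(1 + 48 * k) ^ 2 = 1 + 48 * k := sq_sqrt (by linarith)
  have hq₁₂ : (q + 1) * (q + 2) = 12 * k := by rw [hq]; linear_combination hsqrt / 4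
  have hΩ : Ωc = -(c / 4) * q ^ 2 := by rw [hΩc, hq]; ring
  have hax : √c * ξ / 2 = a * ξ := by ring
  rw [hg', hU₀, deriv_deriv_comp_mul_left (fun y => sinh y * cosh y ^ (-(q + 1))),
    deriv_deriv_sinh_mul_cosh_rpow, ha, hΩ]
  simp only [hax]
  linear_combination (-(c / 4) * (sinh (a * ξ) * cosh (a * ξ) ^ (-(q + 1))) / cosh (a * ξ) ^ 2) *
    hq₁₂
end

section
/- The function W(y) = (1/4)·(y·tanh y − 1)·sech²y satisfies −W''(y) + 4·W(y) − 12·sech²(y)·W(y) = sech²(y) for all y ∈ ℝ, and moreover ∫_ℝ sech²(y)·W(y) dy = −1/4. -/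
/-!
With `t = tanh y` one has `sech² y = 1 - t²` and `t' = 1 - t²`, so `W` and its derivatives are
polynomials in `y` and `t`, and the differential equation becomes a polynomial identity.
For the integral, `sech² · W` has the explicit antiderivative `-(y (1 - t²)² + 3t - t³) / 16`,
whose limits at `∓∞` are `±1/8` because `|y| sech² y ≤ 1/2`; the same bound gives
`|sech² · W| ≤ sech² ≤ (1 + y²)⁻¹`, hence integrability.
-/

open MeasureTheory Filter Topology

namespace Real

theorem one_div_cosh_sq (x : ℝ) : (1 / cosh x) ^ 2 = 1 - tanh x ^ 2 := by
  have := (cosh_pos x).ne'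
  rw [tanh_eq_sinh_div_cosh]
  field_simp
  linarith [cosh_sq_sub_sinh_sq x]

theorem hasDerivAt_tanh (x : ℝ) : HasDerivAt tanh (1 - tanh x ^ 2) x := by
  have h := (hasDerivAt_sinh x).div (hasDerivAt_cosh x) (cosh_pos x).ne'
  refine (h.congr_of_eventuallyEq (.of_forall tanh_eq_sinh_div_cosh)).congr_deriv ?_
  rw [← one_div_cosh_sq, div_pow, one_pow, ← cosh_sq_sub_sinh_sq x]
  ring

theorem one_sub_tanh (x : ℝ) : 1 - tanh x = 2 / (exp (2 * x) + 1) := by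
  have h1 := (cosh_pos x).ne'
  have h2 : exp x * exp (-x) = 1 := by rw [← exp_add, add_neg_cancel, exp_zero]
  rw [tanh_eq_sinh_div_cosh, eq_div_iff (by positivity), one_sub_div h1, cosh_sub_sinh,
    cosh_eq, show 2 * x = x + x by ring, exp_add]
  field_simp
  linear_combination exp x * h2

theorem tendsto_tanh_atTop : Tendsto tanh atTop (𝓝 1) := by
  have h : Tendsto (fun x => 2 / (exp (2 * x) + 1)) atTop (𝓝 0) :=
    tendsto_const_nhds.div_atTop <| tendsto_atTop_add_const_right _ _ <|
      tendsto_exp_atTop.comp <| tendsto_id.const_mul_atTop two_pos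
  simp_rw [← one_sub_tanh] at h
  simpa using (tendsto_const_nhds (x := (1 : ℝ))).sub h

theorem tendsto_tanh_atBot : Tendsto tanh atBot (𝓝 (-1)) := by
  simpa [Function.comp_def] using (tendsto_tanh_atTop.comp tendsto_neg_atBot_atTop).neg

theorem one_add_sq_le_cosh_sq (x : ℝ) : 1 + x ^ 2 ≤ cosh x ^ 2 := by
  have h : |x| ≤ |sinh x| := by rw [abs_sinh]; exact self_le_sinh_iff.mpr (abs_nonneg x)
  linarith [cosh_sq x, sq_le_sq.mpr h]

theorem one_sub_tanh_sq_nonneg (x : ℝ) : 0 ≤ 1 - tanh x ^ 2 := by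
  rw [← one_div_cosh_sq]; positivity

theorem one_sub_tanh_sq_le (x : ℝ) : 1 - tanh x ^ 2 ≤ (1 + x ^ 2)⁻¹ := by
  rw [← one_div_cosh_sq, div_pow, one_pow, one_div]
  exact inv_anti₀ (by positivity) (one_add_sq_le_cosh_sq x)

theorem abs_mul_one_sub_tanh_sq_le (x : ℝ) : |x| * (1 - tanh x ^ 2) ≤ 1 / 2 := by
  have h : 2 * |x| ≤ 1 + x ^ 2 := by nlinarith [sq_abs x, sq_nonneg (|x| - 1)]
  calc |x| * (1 - tanh x ^ 2) ≤ |x| * (1 + x ^ 2)⁻¹ :=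
        mul_le_mul_of_nonneg_left (one_sub_tanh_sq_le x) (abs_nonneg x)
    _ ≤ 1 / 2 := by rw [← div_eq_mul_inv, div_le_iff₀ (by positivity)]; linarith

@[fun_prop]
theorem continuous_tanh : Continuous tanh :=
  continuous_iff_continuousAt.mpr fun x => (hasDerivAt_tanh x).continuousAt

theorem integrable_one_sub_tanh_sq : Integrable fun x : ℝ => 1 - tanh x ^ 2 :=
  integrable_inv_one_add_sq.mono' (by fun_prop) <| .of_forall fun x => by
    rw [norm_of_nonneg (one_sub_tanh_sq_nonneg x)]
    exact one_sub_tanh_sq_le x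

theorem tendsto_one_sub_tanh_sq_atTop : Tendsto (fun x => 1 - tanh x ^ 2) atTop (𝓝 0) := by
  simpa using (tendsto_tanh_atTop.pow 2).const_sub 1

theorem tendsto_one_sub_tanh_sq_atBot : Tendsto (fun x => 1 - tanh x ^ 2) atBot (𝓝 0) := by
  simpa using (tendsto_tanh_atBot.pow 2).const_sub 1

theorem tendsto_mul_one_sub_tanh_sq_sq {l : Filter ℝ}
    (hl : Tendsto (fun x => 1 - tanh x ^ 2) l (𝓝 0)) :
    Tendsto (fun x => x * (1 - tanh x ^ 2) ^ 2) l (𝓝 0) := by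
  refine squeeze_zero_norm (fun x => ?_) (by simpa using hl.div_const 2)
  simp only [norm_mul, norm_pow, Real.norm_eq_abs]
  rw [abs_of_nonneg (one_sub_tanh_sq_nonneg x), sq, ← mul_assoc]
  linarith [mul_le_mul_of_nonneg_right (abs_mul_one_sub_tanh_sq_le x) (one_sub_tanh_sq_nonneg x)]

theorem abs_mul_tanh_sub_one_le (x : ℝ) : |x * tanh x - 1| ≤ |x| + 1 := by
  have ht : |tanh x| ≤ 1 := abs_le.mpr ⟨(neg_one_lt_tanh x).le, (tanh_lt_one x).le⟩
  calc |x * tanh x - 1| ≤ |x| * |tanh x| + 1 := by simpa [abs_mul] using abs_sub (x * tanh x) 1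
    _ ≤ |x| + 1 := by nlinarith [abs_nonneg x]

end Real

open Real

theorem hasDerivAt_W (y : ℝ) :
    HasDerivAt (fun y => 1 / 4 * (y * tanh y - 1) * (1 - tanh y ^ 2))
      ((1 - tanh y ^ 2) * (3 * tanh y + y - 3 * y * tanh y ^ 2) / 4) y := by
  have ht := hasDerivAt_tanh y
  refine ((((hasDerivAt_id y).mul ht).sub_const 1).const_mul (1 / 4)).mul
    ((ht.pow 2).const_sub 1) |>.congr_deriv ?_
  simp only [Pi.mul_apply, Pi.pow_apply, id, Nat.cast_ofNat]
  ring

theorem hasDerivAt_deriv_W (y : ℝ) :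
    HasDerivAt (fun y => (1 - tanh y ^ 2) * (3 * tanh y + y - 3 * y * tanh y ^ 2) / 4)
      ((1 - tanh y ^ 2) * (1 - 3 * tanh y ^ 2 - 2 * y * tanh y + 3 * y * tanh y ^ 3)) y := by
  have ht := hasDerivAt_tanh y
  refine (((ht.pow 2).const_sub 1).mul ((((ht.const_mul 3).add (hasDerivAt_id y)).sub
    (((hasDerivAt_id y).const_mul 3).mul (ht.pow 2))))).div_const 4 |>.congr_deriv ?_
  simp only [Pi.add_apply, Pi.sub_apply, Pi.mul_apply, Pi.pow_apply, id, Nat.cast_ofNat]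
  ring

theorem hasDerivAt_one_sub_tanh_sq_mul_W_antideriv (y : ℝ) :
    HasDerivAt (fun y => -(y * (1 - tanh y ^ 2) ^ 2 + 3 * tanh y - tanh y ^ 3) / 16)
      ((1 - tanh y ^ 2) * (1 / 4 * (y * tanh y - 1) * (1 - tanh y ^ 2))) y := by
  have ht := hasDerivAt_tanh y
  refine ((((hasDerivAt_id y).mul (((ht.pow 2).const_sub 1).pow 2)).add (ht.const_mul 3)).sub
    (ht.pow 3)).neg.div_const 16 |>.congr_deriv ?_
  simp only [Pi.pow_apply, id, Nat.cast_ofNat]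
  ring

theorem tendsto_one_sub_tanh_sq_mul_W_antideriv_atTop :
    Tendsto (fun y => -(y * (1 - tanh y ^ 2) ^ 2 + 3 * tanh y - tanh y ^ 3) / 16) atTop
      (𝓝 (-1 / 8)) := by
  convert (((tendsto_mul_one_sub_tanh_sq_sq tendsto_one_sub_tanh_sq_atTop).add
    (tendsto_tanh_atTop.const_mul 3)).sub (tendsto_tanh_atTop.pow 3)).neg.div_const 16 using 2
  norm_num

theorem tendsto_one_sub_tanh_sq_mul_W_antideriv_atBot :
    Tendsto (fun y => -(y * (1 - tanh y ^ 2) ^ 2 + 3 * tanh y - tanh y ^ 3) / 16) atBot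
      (𝓝 (1 / 8)) := by
  convert (((tendsto_mul_one_sub_tanh_sq_sq tendsto_one_sub_tanh_sq_atBot).add
    (tendsto_tanh_atBot.const_mul 3)).sub (tendsto_tanh_atBot.pow 3)).neg.div_const 16 using 2
  norm_num

theorem integrable_one_sub_tanh_sq_mul_W :
    Integrable fun y => (1 - tanh y ^ 2) * (1 / 4 * (y * tanh y - 1) * (1 - tanh y ^ 2)) := by
  refine integrable_one_sub_tanh_sq.mono' (by fun_prop) (.of_forall fun y => ?_)
  have hs := one_sub_tanh_sq_nonneg y
  have hbound : |y * tanh y - 1| * (1 - tanh y ^ 2) ≤ 3 / 2 := by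
    nlinarith [abs_mul_one_sub_tanh_sq_le y, abs_mul_tanh_sub_one_le y, sq_nonneg (tanh y)]
  calc ‖(1 - tanh y ^ 2) * (1 / 4 * (y * tanh y - 1) * (1 - tanh y ^ 2))‖
      = |y * tanh y - 1| * (1 - tanh y ^ 2) * (1 - tanh y ^ 2) / 4 := by
        rw [Real.norm_eq_abs, abs_mul, abs_mul, abs_mul, abs_of_nonneg hs,
          abs_of_pos (by norm_num : (0 : ℝ) < 1 / 4)]
        ring
    _ ≤ 3 / 2 * (1 - tanh y ^ 2) / 4 := by gcongr
    _ ≤ 1 - tanh y ^ 2 := by linarith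

/-- `W(y) = (1/4)(y·tanh y − 1)·sech²y` solves `−W'' + 4W − 12 sech²(y)W = sech²(y)`
and `∫ sech²(y)·W(y) dy = −1/4`. -/
theorem W_inhomogeneous_solution (W : ℝ → ℝ)
    (hW : W = fun y => (1 / 4) * (y * Real.tanh y - 1) * (1 / Real.cosh y) ^ 2) :
    (∀ y : ℝ, -deriv (deriv W) y + 4 * W y - 12 * (1 / Real.cosh y) ^ 2 * W y
      = (1 / Real.cosh y) ^ 2) ∧
    (∫ y : ℝ, (1 / Real.cosh y) ^ 2 * W y) = -1 / 4 := by
  subst hW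
  simp only [one_div_cosh_sq]
  refine ⟨fun y => ?_, ?_⟩
  · rw [funext fun y => (hasDerivAt_W y).deriv, (hasDerivAt_deriv_W y).deriv]
    ring
  · rw [integral_of_hasDerivAt_of_tendsto hasDerivAt_one_sub_tanh_sq_mul_W_antideriv
      integrable_one_sub_tanh_sq_mul_W tendsto_one_sub_tanh_sq_mul_W_antideriv_atBot
      tendsto_one_sub_tanh_sq_mul_W_antideriv_atTop]
    norm_num
end

section
/- Let c > 0, k > 0, p = (√(1 + 48k) − 1)/2, U₀(ξ) = 3c·sech²(√c·ξ/2), and g(ξ) = sech^p(√c·ξ/2). Suppose W : ℝ → ℝ is twice continuously differentiable with W and W' bounded and W(ξ), W'(ξ) → 0 as |ξ| → ∞, and satisfies −W''(ξ) + c·W(ξ) − U₀(ξ)·W(ξ) = g(ξ)² for all ξ ∈ ℝ. Then ∫_ℝ U₀'(ξ)²·W(ξ) dξ = c·∫_ℝ U₀(ξ)·g(ξ)² dξ − (1/2)·∫_ℝ U₀(ξ)²·g(ξ)² dξ. -/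
/-!
Write `U = U₀` and `L₁ = -∂² + c - U`. Differentiating the soliton equation
`U'' = c U - U² / 2` once more gives `L₁ U'' = U'²`. Since `L₁` is formally self-adjoint and the
Wronskian `U'' W' - U''' W` vanishes at infinity,
`∫ U'² W = ⟨L₁ U'', W⟩ = ⟨U'', L₁ W⟩ = ∫ (c U - U² / 2) g²`.
-/

open MeasureTheory Filter Topology

namespace Real

theorem inv_cosh_sq (x : ℝ) : (cosh x)⁻¹ ^ 2 = 1 - tanh x ^ 2 := by
  rw [tanh_eq_sinh_div_cosh]
  field_simp
  linear_combination -cosh_sq x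

theorem integrable_inv_cosh_sq : Integrable fun x => (cosh x)⁻¹ ^ 2 := by
  refine integrable_inv_one_add_sq.mono' (by fun_prop) (.of_forall fun x => ?_)
  rw [norm_pow, norm_inv, norm_of_nonneg (cosh_pos x).le, inv_pow]
  exact inv_anti₀ (by positivity) (one_add_sq_le_cosh_sq x)

theorem tendsto_cosh_cocompact : Tendsto cosh (cocompact ℝ) atTop := by
  refine tendsto_atTop_mono (fun x => ?_) tendsto_norm_cocompact_atTop
  refine abs_le_of_sq_le_sq ?_ (cosh_pos x).le
  linarith [one_add_sq_le_cosh_sq x]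

theorem continuous_one_div_cosh_rpow (p : ℝ) : Continuous fun x => (1 / cosh x) ^ p :=
  (continuous_const.div continuous_cosh fun x => (cosh_pos x).ne').rpow_const
    fun x => Or.inl (one_div_pos.2 (cosh_pos x)).ne'

theorem abs_one_div_cosh_rpow_le_one {p : ℝ} (hp : 0 ≤ p) (x : ℝ) : |(1 / cosh x) ^ p| ≤ 1 := by
  have h0 : 0 ≤ 1 / cosh x := by positivity
  rw [abs_of_nonneg (rpow_nonneg h0 p)]
  exact rpow_le_one h0 ((div_le_one (cosh_pos x)).2 (one_le_cosh x)) hp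

end Real

/-- Green's identity `∫ (L f) w = ∫ f (L w)` for `L = -∂² + V` on the line, when the Wronskian
`f w' - f' w` vanishes at infinity. -/
theorem integral_mul_eq_integral_mul_of_schrodinger {V f f' w w' a b : ℝ → ℝ}
    (hf : ∀ x, HasDerivAt f (f' x) x) (hf' : ∀ x, HasDerivAt f' (V x * f x - a x) x)
    (hw : ∀ x, HasDerivAt w (w' x) x) (hw' : ∀ x, HasDerivAt w' (V x * w x - b x) x)
    (ha : Integrable fun x => a x * w x) (hb : Integrable fun x => f x * b x)
    (hlim : Tendsto (fun x => f x * w' x - f' x * w x) (cocompact ℝ) (𝓝 0)) :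
    ∫ x, a x * w x = ∫ x, f x * b x := by
  have hderiv : ∀ x, HasDerivAt (fun x => f x * w' x - f' x * w x) (a x * w x - f x * b x) x :=
    fun x => (((hf x).mul (hw' x)).sub ((hf' x).mul (hw x))).congr_deriv (by ring)
  have h := integral_of_hasDerivAt_of_tendsto hderiv (ha.sub hb)
    (hlim.mono_left atBot_le_cocompact) (hlim.mono_left atTop_le_cocompact)
  rw [integral_sub ha hb, sub_self] at h
  exact sub_eq_zero.mp h

noncomputable def kdvSoliton (c ξ : ℝ) : ℝ := 3 * c * (1 / Real.cosh (Real.sqrt c * ξ / 2)) ^ 2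

namespace kdvSoliton

open Real

variable {c : ℝ}

theorem eq_tanh (c ξ : ℝ) : kdvSoliton c ξ = 3 * c * (1 - tanh (√c * ξ / 2) ^ 2) := by
  rw [kdvSoliton, one_div, inv_cosh_sq]

theorem hasDerivAt (c ξ : ℝ) :
    HasDerivAt (kdvSoliton c) (-(√c * tanh (√c * ξ / 2)) * kdvSoliton c ξ) ξ := by
  have hy : HasDerivAt (fun ξ => √c * ξ / 2) (√c / 2) ξ := by
    simpa using ((hasDerivAt_id ξ).const_mul √c).div_const 2
  rw [show kdvSoliton c = _ from funext (eq_tanh c)]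
  refine ((((hasDerivAt_tanh _).comp ξ hy).pow 2).const_sub 1 |>.const_mul (3 * c)).congr_deriv ?_
  simp only [Function.comp_apply]
  ring

theorem deriv_eq (c : ℝ) :
    deriv (kdvSoliton c) = fun ξ => -(√c * tanh (√c * ξ / 2)) * kdvSoliton c ξ :=
  funext fun ξ => (hasDerivAt c ξ).deriv

theorem hasDerivAt_deriv (hc : 0 ≤ c) (ξ : ℝ) :
    HasDerivAt (deriv (kdvSoliton c)) (c * kdvSoliton c ξ - kdvSoliton c ξ ^ 2 / 2) ξ := by
  have hy : HasDerivAt (fun ξ => √c * ξ / 2) (√c / 2) ξ := by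
    simpa using ((hasDerivAt_id ξ).const_mul √c).div_const 2
  rw [deriv_eq]
  refine ((((hasDerivAt_tanh _).comp ξ hy).const_mul √c).neg.mul (hasDerivAt c ξ)).congr_deriv ?_
  simp only [Function.comp_apply, Pi.neg_apply, eq_tanh]
  linear_combination -(3 / 2 * c * (1 - tanh (√c * ξ / 2) ^ 2) * (1 - 3 * tanh (√c * ξ / 2) ^ 2))
    * sq_sqrt hc

theorem nonneg (hc : 0 ≤ c) (ξ : ℝ) : 0 ≤ kdvSoliton c ξ := by
  unfold kdvSoliton; positivity

theorem le_three_mul (hc : 0 ≤ c) (ξ : ℝ) : kdvSoliton c ξ ≤ 3 * c := by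
  rw [eq_tanh]
  exact mul_le_of_le_one_right (by positivity) (by linarith [sq_nonneg (tanh (√c * ξ / 2))])

theorem abs_deriv_le (hc : 0 ≤ c) (ξ : ℝ) :
    |deriv (kdvSoliton c) ξ| ≤ √c * kdvSoliton c ξ := by
  rw [deriv_eq, abs_mul, abs_neg, abs_mul, abs_of_nonneg (sqrt_nonneg c),
    abs_of_nonneg (nonneg hc ξ)]
  exact mul_le_mul_of_nonneg_right (mul_le_of_le_one_right (sqrt_nonneg c)
    (abs_tanh_lt_one _).le) (nonneg hc ξ)

theorem continuous (c : ℝ) : Continuous (kdvSoliton c) :=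
  continuous_iff_continuousAt.2 fun ξ => (hasDerivAt c ξ).continuousAt

theorem continuous_deriv (hc : 0 ≤ c) : Continuous (deriv (kdvSoliton c)) :=
  continuous_iff_continuousAt.2 fun ξ => (hasDerivAt_deriv hc ξ).continuousAt

theorem integrable (hc : 0 < c) : Integrable (kdvSoliton c) := by
  have hs : √c / 2 ≠ 0 := by positivity
  refine ((integrable_inv_cosh_sq.comp_mul_left' hs).const_mul (3 * c)).congr
    (.of_forall fun ξ => ?_)
  simp only [kdvSoliton, one_div]
  ring_nf

theorem integrable_deriv (hc : 0 < c) : Integrable (deriv (kdvSoliton c)) :=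
  ((integrable hc).const_mul √c).mono' (continuous_deriv hc.le).aestronglyMeasurable
    (.of_forall fun ξ => abs_deriv_le hc.le ξ)

theorem integrable_pow_succ_mul (hc : 0 < c) (n : ℕ) {h : ℝ → ℝ} {C : ℝ} (hh : Continuous h)
    (hC : ∀ ξ, |h ξ| ≤ C) : Integrable fun ξ => kdvSoliton c ξ ^ (n + 1) * h ξ := by
  refine ((integrable hc).mul_bdd (c := (3 * c) ^ n * C)
    (((continuous c).pow n).mul hh).aestronglyMeasurable (.of_forall fun ξ => ?_)).congr
    (.of_forall fun ξ => by simp only [Pi.mul_apply, Pi.pow_apply]; ring)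
  rw [Pi.mul_apply, Pi.pow_apply, norm_mul, norm_pow, norm_of_nonneg (nonneg hc.le ξ), norm_eq_abs]
  exact mul_le_mul (pow_le_pow_left₀ (nonneg hc.le ξ) (le_three_mul hc.le ξ) n) (hC ξ)
    (abs_nonneg _) (by positivity)

theorem integrable_deriv_sq_mul (hc : 0 < c) {h : ℝ → ℝ} {C : ℝ} (hh : Continuous h)
    (hC : ∀ ξ, |h ξ| ≤ C) : Integrable fun ξ => deriv (kdvSoliton c) ξ ^ 2 * h ξ := by
  refine ((integrable_deriv hc).mul_bdd (c := √c * (3 * c) * C)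
    ((continuous_deriv hc.le).mul hh).aestronglyMeasurable (.of_forall fun ξ => ?_)).congr
    (.of_forall fun ξ => by simp only [Pi.mul_apply]; ring)
  rw [Pi.mul_apply, norm_mul, norm_eq_abs, norm_eq_abs]
  exact mul_le_mul ((abs_deriv_le hc.le ξ).trans
    (mul_le_mul_of_nonneg_left (le_three_mul hc.le ξ) (sqrt_nonneg c))) (hC ξ) (abs_nonneg _)
    (by positivity)

theorem tendsto_cocompact (hc : 0 < c) : Tendsto (kdvSoliton c) (cocompact ℝ) (𝓝 0) := by
  have hcosh : Tendsto (fun ξ => cosh (√c / 2 * ξ)) (cocompact ℝ) atTop :=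
    tendsto_cosh_cocompact.comp (tendsto_cocompact_mul_left₀ (by positivity))
  have := (hcosh.inv_tendsto_atTop.pow 2).const_mul (3 * c)
  simp only [zero_pow two_ne_zero, mul_zero] at this
  refine this.congr fun ξ => ?_
  simp only [Pi.inv_apply, kdvSoliton, one_div]
  ring_nf

theorem tendsto_deriv_cocompact (hc : 0 < c) :
    Tendsto (deriv (kdvSoliton c)) (cocompact ℝ) (𝓝 0) :=
  squeeze_zero_norm (fun ξ => abs_deriv_le hc.le ξ) (by
    simpa using (tendsto_cocompact hc).const_mul √c)

/- With `hasDerivAt_deriv`, the next two lemmas say `L₁ U'' = U'²` for `L₁ = -∂² + c - U`. -/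

theorem hasDerivAt_mul_sub_sq_div_two (c ξ : ℝ) :
    HasDerivAt (fun ξ => c * kdvSoliton c ξ - kdvSoliton c ξ ^ 2 / 2)
      ((c - kdvSoliton c ξ) * deriv (kdvSoliton c) ξ) ξ := by
  have hU := hasDerivAt c ξ
  rw [← hU.deriv] at hU
  exact ((hU.const_mul c).sub ((hU.pow 2).div_const 2)).congr_deriv (by ring)

theorem hasDerivAt_sub_mul_deriv (hc : 0 ≤ c) (ξ : ℝ) :
    HasDerivAt (fun ξ => (c - kdvSoliton c ξ) * deriv (kdvSoliton c) ξ)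
      ((c - kdvSoliton c ξ) * (c * kdvSoliton c ξ - kdvSoliton c ξ ^ 2 / 2)
        - deriv (kdvSoliton c) ξ ^ 2) ξ := by
  have hU := hasDerivAt c ξ
  rw [← hU.deriv] at hU
  exact ((hU.const_sub c).mul (hasDerivAt_deriv hc ξ)).congr_deriv (by ring)

theorem tendsto_wronskian_cocompact (hc : 0 < c) {w w' : ℝ → ℝ}
    (hw : Tendsto w (cocompact ℝ) (𝓝 0)) (hw' : Tendsto w' (cocompact ℝ) (𝓝 0)) :
    Tendsto (fun ξ => (c * kdvSoliton c ξ - kdvSoliton c ξ ^ 2 / 2) * w' ξ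
      - (c - kdvSoliton c ξ) * deriv (kdvSoliton c) ξ * w ξ) (cocompact ℝ) (𝓝 0) := by
  have hU := tendsto_cocompact hc
  simpa using (((hU.const_mul c).sub ((hU.pow 2).div_const 2)).mul hw').sub
    (((tendsto_const_nhds.sub hU).mul (tendsto_deriv_cocompact hc)).mul hw)

end kdvSoliton

theorem key_integral_identity_general (c k : ℝ) (hc : 0 < c) (hk : 0 < k)
    (p : ℝ) (hp : p = (Real.sqrt (1 + 48 * k) - 1) / 2)
    (U₀ g : ℝ → ℝ)
    (hU₀ : U₀ = fun ξ => 3 * c * (1 / Real.cosh (Real.sqrt c * ξ / 2)) ^ 2)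
    (hg : g = fun ξ => (1 / Real.cosh (Real.sqrt c * ξ / 2)) ^ p)
    (W : ℝ → ℝ) (hW : ContDiff ℝ 2 W)
    (hWbdd : ∃ M : ℝ, ∀ ξ : ℝ, |W ξ| ≤ M)
    (hWlim : Filter.Tendsto W (Filter.cocompact ℝ) (nhds 0))
    (hW'lim : Filter.Tendsto (deriv W) (Filter.cocompact ℝ) (nhds 0))
    (heq : ∀ ξ : ℝ, -deriv (deriv W) ξ + c * W ξ - U₀ ξ * W ξ = g ξ ^ 2) :
    (∫ ξ : ℝ, (deriv U₀ ξ) ^ 2 * W ξ)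
      = c * (∫ ξ : ℝ, U₀ ξ * g ξ ^ 2) - (1 / 2) * (∫ ξ : ℝ, U₀ ξ ^ 2 * g ξ ^ 2) := by
  obtain rfl : U₀ = kdvSoliton c := hU₀
  set U := kdvSoliton c
  obtain ⟨M, hM⟩ := hWbdd
  have hp0 : 0 ≤ p := by
    rw [hp]; linarith [Real.one_le_sqrt.2 (by linarith : (1 : ℝ) ≤ 1 + 48 * k)]
  have hg2 : ∀ ξ, |g ξ ^ 2| ≤ 1 := fun ξ => by
    rw [abs_pow, hg]
    exact pow_le_one₀ (abs_nonneg _) (Real.abs_one_div_cosh_rpow_le_one hp0 _)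
  have hg2cont : Continuous fun ξ => g ξ ^ 2 := by
    rw [hg]; exact ((Real.continuous_one_div_cosh_rpow p).comp (by fun_prop)).pow 2
  have hUg := kdvSoliton.integrable_pow_succ_mul hc 0 hg2cont hg2
  have hU2g := kdvSoliton.integrable_pow_succ_mul hc 1 hg2cont hg2
  simp only [zero_add, pow_one, one_add_one_eq_two] at hUg hU2g
  have hW'' : ∀ ξ, HasDerivAt (deriv W) ((c - U ξ) * W ξ - g ξ ^ 2) ξ := fun ξ =>
    (hW.differentiable_deriv_two ξ).hasDerivAt.congr_deriv (by linarith [heq ξ])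
  have hsplit : (fun ξ => (c * U ξ - U ξ ^ 2 / 2) * g ξ ^ 2)
      = fun ξ => c * (U ξ * g ξ ^ 2) - 1 / 2 * (U ξ ^ 2 * g ξ ^ 2) :=
    funext fun ξ => by ring
  rw [integral_mul_eq_integral_mul_of_schrodinger (kdvSoliton.hasDerivAt_mul_sub_sq_div_two c)
    (kdvSoliton.hasDerivAt_sub_mul_deriv hc.le)
    (fun ξ => (hW.differentiable two_ne_zero ξ).hasDerivAt) hW''
    (kdvSoliton.integrable_deriv_sq_mul hc hW.continuous hM)
    (hsplit ▸ (hUg.const_mul c).sub (hU2g.const_mul (1 / 2)))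
    (kdvSoliton.tendsto_wronskian_cocompact hc hWlim hW'lim),
    hsplit, integral_sub (hUg.const_mul c) (hU2g.const_mul (1 / 2)), integral_const_mul,
    integral_const_mul]

/-- Key identity at the first pitchfork bifurcation: if `W = L₁⁻¹g²` (i.e. `W`
is a bounded, decaying solution of `−W'' + cW − U₀W = g²`), then
`∫ (U₀')²W = c∫U₀g² − (1/2)∫U₀²g²`. -/
theorem key_integral_identity (c k : ℝ) (hc : 0 < c) (hk : 0 < k)
    (p : ℝ) (hp : p = (Real.sqrt (1 + 48 * k) - 1) / 2)
    (U₀ g : ℝ → ℝ)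
    (hU₀ : U₀ = fun ξ => 3 * c * (1 / Real.cosh (Real.sqrt c * ξ / 2)) ^ 2)
    (hg : g = fun ξ => (1 / Real.cosh (Real.sqrt c * ξ / 2)) ^ p)
    (W : ℝ → ℝ) (hW : ContDiff ℝ 2 W)
    (hWbdd : ∃ M : ℝ, ∀ ξ : ℝ, |W ξ| ≤ M)
    (hW'bdd : ∃ M : ℝ, ∀ ξ : ℝ, |deriv W ξ| ≤ M)
    (hWlim : Filter.Tendsto W (Filter.cocompact ℝ) (nhds 0))
    (hW'lim : Filter.Tendsto (deriv W) (Filter.cocompact ℝ) (nhds 0))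
    (heq : ∀ ξ : ℝ, -deriv (deriv W) ξ + c * W ξ - U₀ ξ * W ξ = g ξ ^ 2) :
    (∫ ξ : ℝ, (deriv U₀ ξ) ^ 2 * W ξ)
      = c * (∫ ξ : ℝ, U₀ ξ * g ξ ^ 2) - (1 / 2) * (∫ ξ : ℝ, U₀ ξ ^ 2 * g ξ ^ 2) :=
  key_integral_identity_general c k hc hk p hp U₀ g hU₀ hg W hW hWbdd hWlim hW'lim heq
end
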